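/- Let n ≥ 1 and let A : V → End(V) be linear with Ω(A(X)Y,Z) totally symmetric and A(X)∘A(Y) = 0 for all X,Y, and let ψ^A(x) = x − ½·A(x)x. Then ψ^A carries the flat connection ∇⁰ to ∇^A = ∇⁰ + A: for all x ∈ V and X,Y ∈ V, the second Fréchet derivative satisfies D²ψ^A(x)(X,Y) + A(Dψ^A(x)X)(Dψ^A(x)Y) = 0. In particular, for every x, X, the curve γ(s) = ψ^A(x + sX) satisfies the geodesic equation of ∇^A: γ''(s) + A(γ'(s))(γ'(s)) = 0 for all s ∈ ℝ. -/

import Mathlib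

/-!
With `B` symmetric, `ψ(x) = x - ½ B(x,x)` has `Dψ(x) = id - B(x, ·)` and `D²ψ(x)(X,Y) = -B(X,Y)`.
Expanding `B(X - B(x,X), Y - B(x,Y))` bilinearly, every term except `B(X,Y)` contains a nested
`B`, so vanishes by `B ∘ B = 0`, and the remaining term cancels `D²ψ(x)(X,Y)`. The geodesic
equation is the special case `X = Y` at `x + sX`, since `γ' = Dψ(x + sX)X` and
`γ'' = D²ψ(x + sX)(X,X)`. Symmetry of `A` itself comes from nondegeneracy of `Ω`.
-/

noncomputable section

/-- The standard symplectic form on `ℝ^{2n}`. -/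
def Omega (n : ℕ) (x y : Fin (2*n) → ℝ) : ℝ :=
  ∑ i : Fin n, (x ⟨i.1, by have := i.isLt; omega⟩ * y ⟨n + i.1, by have := i.isLt; omega⟩
    - x ⟨n + i.1, by have := i.isLt; omega⟩ * y ⟨i.1, by have := i.isLt; omega⟩)

/-- The map `ψ^A(x) = x − ½·A(x)x` associated to a linear `A : V → End(V)`. -/
def psiMap (n : ℕ)
    (A : (Fin (2*n) → ℝ) →ₗ[ℝ] (Fin (2*n) → ℝ) →ₗ[ℝ] (Fin (2*n) → ℝ))
    (x : Fin (2*n) → ℝ) : Fin (2*n) → ℝ :=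
  x - (1/2 : ℝ) • A x x

theorem Omega_single_lower {n : ℕ} (u : Fin (2*n) → ℝ) (k : ℕ) (hk : k < n) :
    Omega n u (Pi.single ⟨k, by omega⟩ 1) = -u ⟨n + k, by omega⟩ := by
  rw [Omega, Fintype.sum_eq_single ⟨k, hk⟩ fun i hi => ?_]
  · simp [Pi.single_apply, Fin.ext_iff]; omega
  · simp [Pi.single_apply, Fin.ext_iff, Fin.val_ne_of_ne hi]; omega

theorem Omega_single_upper {n : ℕ} (u : Fin (2*n) → ℝ) (k : ℕ) (hk : k < n) :
    Omega n u (Pi.single ⟨n + k, by omega⟩ 1) = u ⟨k, by omega⟩ := by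
  rw [Omega, Fintype.sum_eq_single ⟨k, hk⟩ fun i hi => ?_]
  · simp [Pi.single_apply, Fin.ext_iff]; omega
  · simp [Pi.single_apply, Fin.ext_iff, Fin.val_ne_of_ne hi]; omega

theorem Omega_left_injective {n : ℕ} {u v : Fin (2*n) → ℝ}
    (h : ∀ z, Omega n u z = Omega n v z) : u = v := by
  funext j
  rcases lt_or_ge (j : ℕ) n with hj | hj
  · simpa [Omega_single_upper _ _ hj] using h (Pi.single ⟨n + j, by omega⟩ 1)
  · have hjn : (j : ℕ) - n < n := by omega
    have hj' : (⟨n + ((j : ℕ) - n), by omega⟩ : Fin (2*n)) = j := Fin.ext (by simp; omega)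
    simpa [Omega_single_lower _ _ hjn, hj'] using h (Pi.single ⟨(j : ℕ) - n, by omega⟩ 1)

section LineRestriction

variable {𝕜 : Type*} [NontriviallyNormedField 𝕜]
  {E F : Type*} [NormedAddCommGroup E] [NormedSpace 𝕜 E] [NormedAddCommGroup F] [NormedSpace 𝕜 F]
  {f : E → F}

theorem deriv_comp_add_smul (hf : Differentiable 𝕜 f) (x X : E) (s : 𝕜) :
    deriv (fun t : 𝕜 => f (x + t • X)) s = fderiv 𝕜 f (x + s • X) X := by
  have hline : HasDerivAt (fun t : 𝕜 => x + t • X) X s := by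
    simpa using ((hasDerivAt_id s).smul_const X).const_add x
  exact ((hf _).hasFDerivAt.comp_hasDerivAt s hline).deriv

theorem deriv_deriv_comp_add_smul (hf : ContDiff 𝕜 2 f) (x X : E) (s : 𝕜) :
    deriv (deriv fun t : 𝕜 => f (x + t • X)) s = iteratedFDeriv 𝕜 2 f (x + s • X) ![X, X] := by
  have hdf : Differentiable 𝕜 (fderiv 𝕜 f) :=
    (hf.fderiv_right (m := 1) (by norm_num)).differentiable (by norm_num)
  have hdfX : Differentiable 𝕜 fun y => fderiv 𝕜 f y X :=
    fun y => (hdf y).clm_apply (differentiableAt_const X)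
  rw [funext (deriv_comp_add_smul (hf.differentiable (by norm_num)) x X),
    deriv_comp_add_smul hdfX, fderiv_clm_apply (hdf _) (differentiableAt_const X),
    iteratedFDeriv_two_apply]
  simp

end LineRestriction

section SymmetricBilinear

variable {𝕜 : Type*} [NontriviallyNormedField 𝕜] [CharZero 𝕜]
  {E : Type*} [NormedAddCommGroup E] [NormedSpace 𝕜 E]
  (B : E →L[𝕜] E →L[𝕜] E)

theorem hasFDerivAt_sub_half_apply_self (hB : ∀ X Y, B X Y = B Y X) (x : E) :
    HasFDerivAt (fun y => y - (1/2 : 𝕜) • B y y) (ContinuousLinearMap.id 𝕜 E - B x) x := by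
  have hq := B.hasFDerivAt_of_bilinear (hasFDerivAt_id x) (hasFDerivAt_id x)
  refine ((hasFDerivAt_id x).sub (hq.const_smul (1/2 : 𝕜))).congr_fderiv ?_
  ext X
  simp only [sub_apply, smul_apply, add_apply, ContinuousLinearMap.precompR_apply,
    ContinuousLinearMap.precompL_apply, ContinuousLinearMap.compL_apply,
    ContinuousLinearMap.comp_id, ContinuousLinearMap.id_apply, id, hB X x]
  module

theorem fderiv_sub_half_apply_self (hB : ∀ X Y, B X Y = B Y X) :
    fderiv 𝕜 (fun y => y - (1/2 : 𝕜) • B y y) = fun x => ContinuousLinearMap.id 𝕜 E - B x :=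
  funext fun x => (hasFDerivAt_sub_half_apply_self B hB x).fderiv

theorem iteratedFDeriv_two_sub_half_apply_self (hB : ∀ X Y, B X Y = B Y X) (x X Y : E) :
    iteratedFDeriv 𝕜 2 (fun y => y - (1/2 : 𝕜) • B y y) x ![X, Y] = -B X Y := by
  rw [iteratedFDeriv_two_apply, fderiv_sub_half_apply_self B hB,
    fderiv_const_sub, ContinuousLinearMap.fderiv]
  simp

theorem iteratedFDeriv_two_add_apply_fderiv_sub_half_apply_self (hB : ∀ X Y, B X Y = B Y X)
    (hnil : ∀ X Y Z, B X (B Y Z) = 0) (x X Y : E) :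
    iteratedFDeriv 𝕜 2 (fun y => y - (1/2 : 𝕜) • B y y) x ![X, Y]
      + B (fderiv 𝕜 (fun y => y - (1/2 : 𝕜) • B y y) x X)
          (fderiv 𝕜 (fun y => y - (1/2 : 𝕜) • B y y) x Y) = 0 := by
  have hnil' : ∀ X Y Z, B (B X Y) Z = 0 := fun X Y Z => by rw [hB]; exact hnil Z X Y
  rw [iteratedFDeriv_two_sub_half_apply_self B hB, fderiv_sub_half_apply_self B hB]
  simp [hnil, hnil']

end SymmetricBilinear

theorem psiA_maps_flat_to_nablaA_general (n : ℕ)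
    (A : (Fin (2*n) → ℝ) →ₗ[ℝ] (Fin (2*n) → ℝ) →ₗ[ℝ] (Fin (2*n) → ℝ))
    (hsym₁ : ∀ X Y Z, Omega n (A X Y) Z = Omega n (A Y X) Z)
    (hnil : ∀ X Y Z, A X (A Y Z) = 0) :
    (∀ x X Y, iteratedFDeriv ℝ 2 (psiMap n A) x ![X, Y]
        + A (fderiv ℝ (psiMap n A) x X) (fderiv ℝ (psiMap n A) x Y) = 0) ∧
    (∀ (x X : Fin (2*n) → ℝ) (s : ℝ),
      deriv (deriv (fun s' : ℝ => psiMap n A (x + s' • X))) s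
        + A (deriv (fun s' : ℝ => psiMap n A (x + s' • X)) s)
            (deriv (fun s' : ℝ => psiMap n A (x + s' • X)) s) = 0) := by
  set B := A.toContinuousBilinearMap
  have hB : ∀ X Y, B X Y = B Y X := fun X Y => Omega_left_injective (hsym₁ X Y)
  have hψ : psiMap n A = fun y => y - (1/2 : ℝ) • B y y := rfl
  have hflat := iteratedFDeriv_two_add_apply_fderiv_sub_half_apply_self B hB hnil
  refine ⟨hflat, fun x X s => ?_⟩
  have hψ_smooth : ContDiff ℝ 2 (psiMap n A) := by rw [hψ]; fun_prop
  rw [deriv_deriv_comp_add_smul hψ_smooth,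
    deriv_comp_add_smul (hψ_smooth.differentiable (by norm_num))]
  exact hflat _ X X

/-- `ψ^A` carries the flat connection `∇⁰` to `∇^A = ∇⁰ + A`:
`D²ψ^A(x)(X,Y) + A(Dψ^A(x)X)(Dψ^A(x)Y) = 0`; in particular `γ(s) = ψ^A(x+sX)` solves the
geodesic equation `γ'' + A(γ')(γ') = 0` of `∇^A`. -/
theorem psiA_maps_flat_to_nablaA (n : ℕ) (hn : 1 ≤ n)
    (A : (Fin (2*n) → ℝ) →ₗ[ℝ] (Fin (2*n) → ℝ) →ₗ[ℝ] (Fin (2*n) → ℝ))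
    (hsym₁ : ∀ X Y Z, Omega n (A X Y) Z = Omega n (A Y X) Z)
    (hsym₂ : ∀ X Y Z, Omega n (A X Y) Z = Omega n (A X Z) Y)
    (hnil : ∀ X Y Z, A X (A Y Z) = 0) :
    (∀ x X Y, iteratedFDeriv ℝ 2 (psiMap n A) x ![X, Y]
        + A (fderiv ℝ (psiMap n A) x X) (fderiv ℝ (psiMap n A) x Y) = 0) ∧
    (∀ (x X : Fin (2*n) → ℝ) (s : ℝ),
      deriv (deriv (fun s' : ℝ => psiMap n A (x + s' • X))) s
        + A (deriv (fun s' : ℝ => psiMap n A (x + s' • X)) s)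
            (deriv (fun s' : ℝ => psiMap n A (x + s' • X)) s) = 0) :=
  psiA_maps_flat_to_nablaA_general n A hsym₁ hnil
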